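/- The enveloping group of the dihedral quandle R_{2n} fits in a short exact sequence 1 → ℤ × ℤ → G_{R_{2n}} → D_{2n} → 1, where the kernel is the central subgroup generated by a_0² and a_1², and D_{2n} is the dihedral group of order 4n with presentation ⟨y_0, y_1 | y_0² = y_1² = (y_0 y_1)^{2n} = 1⟩. -/

import Mathlib

/-!
The map `a_x ↦ sr x` onto the dihedral group kills `a_0²` and `a_1²`, which are central because
the dihedral quandle is involutory (`a_x² a_y a_x⁻² = a_{x ◃ (x ◃ y)} = a_y`). Conversely, modulo
these two squares every `a_x` becomes an involution `b_x`, since `b_{2x-y}² = b_x b_y² b_x⁻¹`.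
For involutions with `b_{2x-y} = b_x b_y b_x` the product `b_x b_{x+1}` does not depend on `x`,
which forces `b_i b_j = b_0 b_{j-i}`: this is the multiplication of the reflections in `D_{2n}`, so
`sr x ↦ b_x` extends to a homomorphism from `D_{2n}` inverting the quotient map, and the kernel
is exactly the closure of the two squares. That closure is free abelian on `a_0², a_1²`:
sending `x` to the basis vector indexed by its parity defines a homomorphism to `ℤ²` mapping
`a_0^{2s} a_1^{2t}` to `(2s, 2t)`.
-/

open Quandles

/-- The image `a_k` of the element `x_k` of the dihedral quandle `R_{2n}`
in its enveloping group. -/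
def dihedralGen (n : ℕ) (k : ℕ) : Rack.EnvelGroup (Quandle.Dihedral (2 * n)) :=
  Rack.toEnvelGroup (Quandle.Dihedral (2 * n)) ((k : ZMod (2 * n)) : Quandle.Dihedral (2 * n))

theorem ZMod.apply_eq_apply_zero_of_periodic {m : ℕ} {α : Type*} {f : ZMod m → α}
    (hf : Function.Periodic f 1) (x : ZMod m) : f x = f 0 := by
  obtain ⟨t, rfl⟩ := ZMod.intCast_surjective x
  simpa using hf.int_mul_eq t

theorem ZMod.reflection_induction {m : ℕ} {P : ZMod m → Prop} (h0 : P 0) (h1 : P 1)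
    (hP : ∀ x y, P y → P (2 * x - y)) (x : ZMod m) : P x := by
  have hpair : Function.Periodic (fun x => P x ∧ P (x + 1)) 1 := fun x => by
    refine propext ⟨fun h => ⟨?_, h.1⟩, fun h => ⟨h.2, ?_⟩⟩
    · convert hP (x + 1) (x + 1 + 1) h.2 using 1; ring
    · convert hP (x + 1) x h.1 using 1; ring
  exact ((ZMod.apply_eq_apply_zero_of_periodic hpair x).mpr ⟨h0, by rwa [zero_add]⟩).1

/-- The relations among the reflections `sr x` of `DihedralGroup m`; `IsDihedralFamily.lift`
shows that they are defining relations. -/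
structure IsDihedralFamily {H : Type*} [Group H] {m : ℕ} (b : ZMod m → H) : Prop where
  mul_self : ∀ x, b x * b x = 1
  reflect : ∀ x y, b (2 * x - y) = b x * b y * b x

namespace IsDihedralFamily

variable {H : Type*} [Group H] {m : ℕ} {b : ZMod m → H}

theorem of_conj (hb : ∀ x y, b (2 * x - y) = b x * b y * (b x)⁻¹) (h0 : b 0 ^ 2 = 1)
    (h1 : b 1 ^ 2 = 1) : IsDihedralFamily b := by
  have hsq : ∀ x, b x ^ 2 = 1 :=
    ZMod.reflection_induction h0 h1 fun x y hy => by
      rw [hb, conj_pow, hy, mul_one, mul_inv_cancel]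
  have hinv : ∀ x, (b x)⁻¹ = b x := fun x => inv_eq_of_mul_eq_one_right (by rw [← sq, hsq])
  exact ⟨fun x => by rw [← sq, hsq], fun x y => by rw [hb, hinv]⟩

theorem mul_add_one (hb : IsDihedralFamily b) (x : ZMod m) : b x * b (x + 1) = b 0 * b 1 := by
  have hper : Function.Periodic (fun x => b x * b (x + 1)) 1 := fun x => by
    have h := hb.reflect (x + 1) x
    rw [show 2 * (x + 1) - x = x + 1 + 1 by ring] at h
    simp only [h, ← mul_assoc, hb.mul_self, one_mul]
  simpa using ZMod.apply_eq_apply_zero_of_periodic hper x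

theorem add_one_mul_add_one (hb : IsDihedralFamily b) (x y : ZMod m) :
    b (x + 1) * b (y + 1) = b x * b y := by
  have hx : b (x + 1) = b x * (b y * b (y + 1)) := by
    rw [hb.mul_add_one, ← hb.mul_add_one x, ← mul_assoc, hb.mul_self, one_mul]
  rw [hx, mul_assoc, mul_assoc, hb.mul_self, mul_one]

theorem mul_eq_mul_sub (hb : IsDihedralFamily b) (i j : ZMod m) :
    b i * b j = b 0 * b (j - i) := by
  have h := ZMod.apply_eq_apply_zero_of_periodic (f := fun k => b k * b (k + (j - i)))
    (fun k => by simp only [add_right_comm k 1, hb.add_one_mul_add_one]) i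
  simpa using h

theorem mul_zero_mul (hb : IsDihedralFamily b) (i j : ZMod m) :
    b i * b 0 * b j = b (i + j) := by
  rw [hb.mul_eq_mul_sub i 0, mul_assoc, hb.mul_eq_mul_sub, ← mul_assoc, hb.mul_self, one_mul]
  congr 1; ring

def lift (hb : IsDihedralFamily b) : DihedralGroup m →* H where
  toFun
    | .r i => b 0 * b i
    | .sr i => b i
  map_one' := hb.mul_self 0
  map_mul' := by
    rintro (i | i) (j | j)
    · show b 0 * b (i + j) = b 0 * b i * (b 0 * b j)
      rw [← hb.mul_zero_mul]; simp only [mul_assoc]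
    · show b (j - i) = b 0 * b i * b j
      rw [mul_assoc, hb.mul_eq_mul_sub i j, ← mul_assoc, hb.mul_self, one_mul]
    · show b (i + j) = b i * (b 0 * b j)
      rw [← mul_assoc, hb.mul_zero_mul]
    · show b 0 * b (j - i) = b i * b j
      rw [hb.mul_eq_mul_sub i j]

end IsDihedralFamily

theorem Subgroup.normal_of_le_center {G : Type*} [Group G] {K : Subgroup G}
    (hK : K ≤ Subgroup.center G) : K.Normal :=
  ⟨fun x hx g => by rwa [Subgroup.mem_center_iff.mp (hK hx) g, mul_inv_cancel_right]⟩

theorem Subgroup.nonempty_closure_pair_mulEquiv {G : Type*} [Group G] {u v : G}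
    (huv : Commute u v) (hind : Function.Injective fun p : ℤ × ℤ => u ^ p.1 * v ^ p.2) :
    Nonempty (Subgroup.closure {u, v} ≃* Multiplicative (ℤ × ℤ)) := by
  set ψ := (zpowersHom G u).noncommCoprod (zpowersHom G v) fun p q => by
    simpa only [zpowersHom_apply] using huv.zpow_zpow p.toAdd q.toAdd with hψ
  have hrange : ψ.range = Subgroup.closure {u, v} := by
    rw [hψ, MonoidHom.noncommCoprod_range, range_zpowersHom, range_zpowersHom, zpowers_eq_closure,
      zpowers_eq_closure, ← closure_union, Set.singleton_union]
  have hinj : Function.Injective ψ := fun p q h => by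
    simpa [Prod.ext_iff] using @hind (p.1.toAdd, p.2.toAdd) (q.1.toAdd, q.2.toAdd) h
  exact ⟨(MulEquiv.subgroupCongr hrange.symm).trans
    ((MonoidHom.ofInjective hinj).symm.trans (MulEquiv.prodMultiplicative (G := ℤ) (H := ℤ)).symm)⟩

namespace Rack

theorem EnvelGroup.hom_ext {R : Type*} [Rack R] {G : Type*} [Group G]
    {f g : EnvelGroup R →* G} (h : ∀ x, f (toEnvelGroup R x) = g (toEnvelGroup R x)) : f = g :=
  toEnvelGroup.map.symm.injective (DFunLike.ext _ _ h)

theorem toEnvelGroup_sq_mem_center {R : Type*} [Rack R] (hR : IsInvolutory R) (x : R) :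
    toEnvelGroup R x ^ 2 ∈ Subgroup.center (EnvelGroup R) := by
  have hconj : (MulAut.conj (toEnvelGroup R x ^ 2)).toMonoidHom = MonoidHom.id _ :=
    EnvelGroup.hom_ext fun y => by
      have h : toEnvelGroup R (x ◃ (x ◃ y)) = toEnvelGroup R y := congrArg _ (hR x y)
      simp only [(toEnvelGroup R).map_act, Quandle.conj_act_eq_conj] at h
      rw [MulEquiv.coe_toMonoidHom, MulAut.conj_apply, MonoidHom.id_apply]
      conv_rhs => rw [← h]
      rw [sq, mul_inv_rev]
      simp only [mul_assoc]
  refine Subgroup.mem_center_iff.mpr fun g => ?_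
  have h := DFunLike.congr_fun hconj g
  simp only [MulEquiv.coe_toMonoidHom, MulAut.conj_apply, MonoidHom.id_apply] at h
  exact eq_mul_inv_iff_mul_eq.mp h.symm

end Rack

theorem DihedralGroup.sr_mul_sr_mul_inv_sr {m : ℕ} (x y : ZMod m) :
    sr x * sr y * (sr x)⁻¹ = sr (2 * x - y) := by
  rw [inv_sr, sr_mul_sr, r_mul_sr]
  congr 1; ring

namespace Quandle.Dihedral

open Rack DihedralGroup

section

variable (m : ℕ)

local notation "a[" x "]" => toEnvelGroup (Dihedral m) (x : ZMod m)

theorem isInvolutory : IsInvolutory (Dihedral m) := dihedralAct.inv m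

def toDihedralGroup : Dihedral m →◃ Conj (DihedralGroup m) where
  toFun x := sr x
  map_act' {x y} := (sr_mul_sr_mul_inv_sr x y).symm

def envelGroupHom : EnvelGroup (Dihedral m) →* DihedralGroup m :=
  toEnvelGroup.map (toDihedralGroup m)

variable {m}

@[simp]
theorem envelGroupHom_apply (x : ZMod m) : envelGroupHom m a[x] = sr x :=
  rfl

theorem envelGroupHom_surjective : Function.Surjective (envelGroupHom m) := by
  rintro (i | i)
  · exact ⟨a[0] * a[i], by simp [sr_mul_sr]⟩
  · exact ⟨a[i], rfl⟩

theorem ker_envelGroupHom_le {H : Type*} [Group H] (F : EnvelGroup (Dihedral m) →* H)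
    (h0 : F a[0] ^ 2 = 1) (h1 : F a[1] ^ 2 = 1) : (envelGroupHom m).ker ≤ F.ker := by
  have hb : IsDihedralFamily fun x : ZMod m => F a[x] :=
    .of_conj (fun x y => by
      rw [← map_inv, ← map_mul, ← map_mul]
      exact congrArg F ((toEnvelGroup (Dihedral m)).map_act (x := x) (y := y))) h0 h1
  have hF : hb.lift.comp (envelGroupHom m) = F := EnvelGroup.hom_ext fun _ => rfl
  intro g hg
  rw [← hF, MonoidHom.mem_ker, MonoidHom.comp_apply, hg, map_one]

theorem closure_sq_le_center :
    Subgroup.closure {a[0] ^ 2, a[1] ^ 2} ≤ Subgroup.center (EnvelGroup (Dihedral m)) := by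
  rw [Subgroup.closure_le, Set.insert_subset_iff, Set.singleton_subset_iff]
  exact ⟨toEnvelGroup_sq_mem_center (isInvolutory m) _,
    toEnvelGroup_sq_mem_center (isInvolutory m) _⟩

theorem ker_envelGroupHom : (envelGroupHom m).ker = Subgroup.closure {a[0] ^ 2, a[1] ^ 2} := by
  set K := Subgroup.closure {a[0] ^ 2, a[1] ^ 2}
  have : K.Normal := Subgroup.normal_of_le_center closure_sq_le_center
  refine le_antisymm ?_ ?_
  · simpa using ker_envelGroupHom_le (QuotientGroup.mk' K)
      ((QuotientGroup.eq_one_iff _).mpr (Subgroup.subset_closure (by simp)))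
      ((QuotientGroup.eq_one_iff _).mpr (Subgroup.subset_closure (by simp)))
  · rw [Subgroup.closure_le, Set.insert_subset_iff, Set.singleton_subset_iff]
    simp [sq]

end

section

variable (n : ℕ)

local notation "a[" x "]" => toEnvelGroup (Dihedral (2 * n)) (x : ZMod (2 * n))

def parity : ZMod (2 * n) →+* ZMod 2 := ZMod.castHom (dvd_mul_right 2 n) (ZMod 2)

variable {n} in
theorem parity_two_mul_sub (x y : ZMod (2 * n)) : parity n (2 * x - y) = parity n y := by
  rw [map_sub, map_mul, map_ofNat, show (2 : ZMod 2) = 0 from rfl, zero_mul, zero_sub,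
    ZMod.neg_eq_self_mod_two]

def parityHom : Dihedral (2 * n) →◃ Conj (Multiplicative (ℤ × ℤ)) where
  toFun x := .ofAdd (if parity n x = 0 then (1, 0) else (0, 1))
  map_act' {x y} := by
    rw [conj_act_eq_conj, mul_inv_cancel_comm]
    exact congrArg _ (by rw [← parity_two_mul_sub x y]; rfl)

theorem map_parityHom_sq_zpow_mul_sq_zpow (s t : ℤ) :
    toEnvelGroup.map (parityHom n) ((a[0] ^ 2) ^ s * (a[1] ^ 2) ^ t) = .ofAdd (2 * s, 2 * t) := by
  have h0 : toEnvelGroup.map (parityHom n) a[0] = .ofAdd (1, 0) := if_pos (map_zero _)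
  have h1 : toEnvelGroup.map (parityHom n) a[1] = .ofAdd (0, 1) :=
    if_neg (by rw [map_one]; exact one_ne_zero)
  rw [map_mul, map_zpow, map_zpow, map_pow, map_pow, h0, h1, ← ofAdd_nsmul, ← ofAdd_nsmul,
    ← ofAdd_zsmul, ← ofAdd_zsmul, ← ofAdd_add]
  simp [mul_comm]

theorem nonempty_closure_sq_mulEquiv :
    Nonempty (Subgroup.closure {a[0] ^ 2, a[1] ^ 2} ≃* Multiplicative (ℤ × ℤ)) := by
  refine Subgroup.nonempty_closure_pair_mulEquiv
    (Subgroup.mem_center_iff.mp (toEnvelGroup_sq_mem_center (isInvolutory _) _) _)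
    fun p q hpq => ?_
  have h := congrArg (toEnvelGroup.map (parityHom n)) hpq
  simp only [map_parityHom_sq_zpow_mul_sq_zpow, EmbeddingLike.apply_eq_iff_eq,
    Prod.mk.injEq] at h
  exact Prod.ext (by omega) (by omega)

end

end Quandle.Dihedral

theorem envelGroup_dihedral_ses (n : ℕ) :
    Subgroup.closure {dihedralGen n 0 ^ 2, dihedralGen n 1 ^ 2}
        ≤ Subgroup.center (Rack.EnvelGroup (Quandle.Dihedral (2 * n))) ∧
    Nonempty ((Subgroup.closure {dihedralGen n 0 ^ 2, dihedralGen n 1 ^ 2})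
        ≃* Multiplicative (ℤ × ℤ)) ∧
    ∃ φ : Rack.EnvelGroup (Quandle.Dihedral (2 * n)) →* DihedralGroup (2 * n),
      Function.Surjective φ ∧
      φ.ker = Subgroup.closure {dihedralGen n 0 ^ 2, dihedralGen n 1 ^ 2} := by
  have h0 : dihedralGen n 0 = Rack.toEnvelGroup (Quandle.Dihedral (2 * n)) (0 : ZMod (2 * n)) :=
    congrArg _ Nat.cast_zero
  have h1 : dihedralGen n 1 = Rack.toEnvelGroup (Quandle.Dihedral (2 * n)) (1 : ZMod (2 * n)) :=
    congrArg _ Nat.cast_one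
  rw [h0, h1]
  exact ⟨Quandle.Dihedral.closure_sq_le_center, Quandle.Dihedral.nonempty_closure_sq_mulEquiv n,
    _, Quandle.Dihedral.envelGroupHom_surjective, Quandle.Dihedral.ker_envelGroupHom⟩
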